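/- Let G be a finite simple graph, let v be a non-isolated vertex of G, let u be a neighbor of v in G, and let G'' be the graph obtained from G by adding a false twin w of v. Then q_N(G'';x) = q_N(G;x) + x·q_N(G^{uv} − u; x), where G^{uv} − u denotes the induced subgraph of the pivot G^{uv} on V ∖ {u}. -/

import Mathlib

open Polynomial

universe u

variable {V : Type u}

/-- The `F_2`-rank of the adjacency matrix of the subgraph of `G` induced by `S`. -/
noncomputable def rankIn [Fintype V] (G : SimpleGraph V) (S : Finset V) : ℕ :=
  letI := Classical.decRel G.Adj
  ((SimpleGraph.adjMatrix (ZMod 2) G).submatrix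
    (fun i : S => (i : V)) (fun i : S => (i : V))).rank

/-- The vertex-nullity interlace polynomial `q_N(G;x) = Σ_{S ⊆ V} (x-1)^{n(G[S])}`. -/
noncomputable def qNull [Fintype V] (G : SimpleGraph V) : Polynomial ℤ :=
  ∑ S : Finset V, ((X : Polynomial ℤ) - 1) ^ (S.card - rankIn G S)

/-- The γ invariant: the coefficient of `x^1` in `q_N(G;x)`. -/
noncomputable def gammaInv [Fintype V] (G : SimpleGraph V) : ℤ :=
  (qNull G).coeff 1

/-- The two-variable interlace polynomial, with `x = X 0`, `y = X 1`. -/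
noncomputable def interlaceQ [Fintype V] (G : SimpleGraph V) : MvPolynomial (Fin 2) ℤ :=
  ∑ S : Finset V,
    (MvPolynomial.X 0 - 1) ^ (rankIn G S) * (MvPolynomial.X 1 - 1) ^ (S.card - rankIn G S)

/-- `x` is adjacent to `v` but not to `w` (and differs from both). -/
def adjOnly (G : SimpleGraph V) (v w x : V) : Prop :=
  x ≠ v ∧ x ≠ w ∧ G.Adj v x ∧ ¬ G.Adj w x

/-- `x` is adjacent to both `v` and `w` (and differs from both). -/
def adjBoth (G : SimpleGraph V) (v w x : V) : Prop :=
  x ≠ v ∧ x ≠ w ∧ G.Adj v x ∧ G.Adj w x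

def pivotToggleHalf (G : SimpleGraph V) (v w x y : V) : Prop :=
  (adjOnly G v w x ∧ adjOnly G w v y) ∨ (adjOnly G v w x ∧ adjBoth G v w y) ∨
    (adjOnly G w v x ∧ adjBoth G v w y)

/-- `x` and `y` lie in two distinct classes among `A_v`, `A_w`, `A_{vw}`. -/
def pivotToggle (G : SimpleGraph V) (v w x y : V) : Prop :=
  pivotToggleHalf G v w x y ∨ pivotToggleHalf G v w y x

/-- The pivot `G^{vw}`: adjacency between vertices in distinct classes among
`A_v`, `A_w`, `A_{vw}` is toggled; all other adjacencies are unchanged. -/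
def pivot (G : SimpleGraph V) (v w : V) : SimpleGraph V where
  Adj x y := x ≠ y ∧
    ((pivotToggle G v w x y ∧ ¬ G.Adj x y) ∨ (¬ pivotToggle G v w x y ∧ G.Adj x y))
  symm := by
    constructor
    intro x y h
    obtain ⟨hne, h⟩ := h
    have hsym : pivotToggle G v w y x ↔ pivotToggle G v w x y := by
      unfold pivotToggle; exact or_comm
    refine ⟨hne.symm, ?_⟩
    rcases h with ⟨ht, hna⟩ | ⟨ht, ha⟩
    · exact Or.inl ⟨hsym.mpr ht, fun hyx => hna hyx.symm⟩
    · exact Or.inr ⟨fun hyx => ht (hsym.mp hyx), ha.symm⟩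
  loopless := ⟨fun x h => h.1 rfl⟩

/-- Deleting the vertex `v`: the induced subgraph on `V \ {v}`. -/
def delVert (G : SimpleGraph V) (v : V) : SimpleGraph {x : V // x ≠ v} :=
  SimpleGraph.comap Subtype.val G

/-- The induced subgraph on a finite vertex subset. -/
def inducedF (G : SimpleGraph V) (s : Finset V) : SimpleGraph {x : V // x ∈ s} :=
  SimpleGraph.comap Subtype.val G

/-- Adding a new pendant vertex (`none`) attached to `u`. -/
def addPendant (G : SimpleGraph V) (u : V) : SimpleGraph (Option V) :=
  SimpleGraph.fromRel (fun x y =>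
    (x = none ∧ y = some u) ∨ ∃ a b, x = some a ∧ y = some b ∧ G.Adj a b)

/-- Adding a new false twin (`none`) of the vertex `v`. -/
def addFalseTwin (G : SimpleGraph V) (v : V) : SimpleGraph (Option V) :=
  SimpleGraph.fromRel (fun x y =>
    (∃ a, x = none ∧ y = some a ∧ G.Adj v a) ∨ ∃ a b, x = some a ∧ y = some b ∧ G.Adj a b)

/-- Adding a new true twin (`none`) of the vertex `v`. -/
def addTrueTwin (G : SimpleGraph V) (v : V) : SimpleGraph (Option V) :=
  SimpleGraph.fromRel (fun x y =>
    (x = none ∧ y = some v) ∨ (∃ a, x = none ∧ y = some a ∧ G.Adj v a) ∨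
      ∃ a b, x = some a ∧ y = some b ∧ G.Adj a b)
/-- `G` is a bipartite distance hereditary graph: obtainable (up to isomorphism) from a
one-vertex graph by adding pendant vertices and false twins of non-isolated vertices. -/
inductive IsBDH : {W : Type u} → SimpleGraph W → Prop
  | single : IsBDH (⊥ : SimpleGraph PUnit)
  | pendant {W : Type u} (G : SimpleGraph W) (u : W) : IsBDH G → IsBDH (addPendant G u)
  | falseTwin {W : Type u} (G : SimpleGraph W) (v : W) (hv : ∃ x, G.Adj v x) :
      IsBDH G → IsBDH (addFalseTwin G v)
  | iso {W W' : Type u} (G : SimpleGraph W) (H : SimpleGraph W') :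
      IsBDH G → G ≃g H → IsBDH H

/-- `DHConstruction G n` : `G` admits a DH construction sequence (up to isomorphism,
starting from a one-vertex graph, adding pendant vertices, false twins and true twins of
non-isolated vertices) with exactly `n` true twins. -/
inductive DHConstruction : {W : Type u} → SimpleGraph W → ℕ → Prop
  | single : DHConstruction (⊥ : SimpleGraph PUnit) 0
  | pendant {W : Type u} (G : SimpleGraph W) (u : W) {n : ℕ} :
      DHConstruction G n → DHConstruction (addPendant G u) n
  | falseTwin {W : Type u} (G : SimpleGraph W) (v : W) (hv : ∃ x, G.Adj v x) {n : ℕ} :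
      DHConstruction G n → DHConstruction (addFalseTwin G v) n
  | trueTwin {W : Type u} (G : SimpleGraph W) (v : W) (hv : ∃ x, G.Adj v x) {n : ℕ} :
      DHConstruction G n → DHConstruction (addTrueTwin G v) (n + 1)
  | iso {W W' : Type u} (G : SimpleGraph W) (H : SimpleGraph W') {n : ℕ} :
      DHConstruction G n → G ≃g H → DHConstruction H n




open Matrix Module

/-- adjacency matrix with classical decidability, matching `rankIn`. -/
noncomputable def adjM (G : SimpleGraph V) : Matrix V V (ZMod 2) :=
  letI := Classical.decRel G.Adj
  SimpleGraph.adjMatrix (ZMod 2) G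

lemma adjM_of_adj {G : SimpleGraph V} {x y : V} (h : G.Adj x y) : adjM G x y = 1 := by
  classical simp [adjM, h]

lemma adjM_of_not_adj {G : SimpleGraph V} {x y : V} (h : ¬ G.Adj x y) : adjM G x y = 0 := by
  classical simp [adjM, h]

lemma adjM_eq_ite (G : SimpleGraph V) (x y : V) [Decidable (G.Adj x y)] :
    adjM G x y = if G.Adj x y then 1 else 0 := by
  by_cases h : G.Adj x y
  · simp [h, adjM_of_adj]
  · simp [h, adjM_of_not_adj]

lemma adjM_symm (G : SimpleGraph V) (x y : V) : adjM G x y = adjM G y x := by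
  by_cases h : G.Adj x y
  · rw [adjM_of_adj h, adjM_of_adj h.symm]
  · rw [adjM_of_not_adj h, adjM_of_not_adj fun h' => h h'.symm]

lemma adjM_self (G : SimpleGraph V) (x : V) : adjM G x x = 0 :=
  adjM_of_not_adj (G.irrefl (v := x))

/-- nullity of a square matrix -/
noncomputable def nullM {n : Type*} [Fintype n] (M : Matrix n n (ZMod 2)) : ℕ :=
  finrank (ZMod 2) (LinearMap.ker M.mulVecLin)

lemma rank_add_nullM {n : Type*} [Fintype n] (M : Matrix n n (ZMod 2)) :
    M.rank + nullM M = Fintype.card n := by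
  classical
  have := LinearMap.finrank_range_add_finrank_ker (M.mulVecLin)
  rwa [Module.finrank_pi] at this

lemma card_sub_rank {n : Type*} [Fintype n] (M : Matrix n n (ZMod 2)) :
    Fintype.card n - M.rank = nullM M := by
  have h := rank_add_nullM M
  omega

/-- indicator matrix of a function -/
def pick {F : Type*} [Field F] {m n : Type*} [DecidableEq n] (f : m → n) : Matrix m n F :=
  Matrix.of fun i j => if f i = j then 1 else 0

lemma submatrix_eq_pick_mul {F : Type*} [Field F] {m n m' n' : Type*}
    [Fintype m] [Fintype n] [DecidableEq m] [DecidableEq n]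
    (A : Matrix m n F) (f : m' → m) (g : n' → n) :
    A.submatrix f g = (pick f : Matrix m' m F) * A * (pick g : Matrix n' n F)ᵀ := by
  ext i j
  simp [pick, Matrix.mul_apply, Finset.sum_ite_eq]

lemma rank_submatrix_le' {F : Type*} [Field F] {m n m' n' : Type*}
    [Fintype m] [Fintype n] [Fintype m'] [Fintype n'] [DecidableEq m] [DecidableEq n]
    (A : Matrix m n F) (f : m' → m) (g : n' → n) :
    (A.submatrix f g).rank ≤ A.rank := by
  rw [submatrix_eq_pick_mul A f g]
  have h1 : ((pick f : Matrix m' m F) * A * (pick g : Matrix n' n F)ᵀ).rank ≤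
      ((pick f : Matrix m' m F) * A).rank :=
    Matrix.rank_mul_le_left ((pick f : Matrix m' m F) * A) (pick g : Matrix n' n F)ᵀ
  have h2 : ((pick f : Matrix m' m F) * A).rank ≤ A.rank := Matrix.rank_mul_le_right (pick f) A
  exact le_trans h1 h2

lemma rank_submatrix_surj {F : Type*} [Field F] {s t : Type*}
    [Fintype s] [Fintype t] [DecidableEq s] [DecidableEq t]
    (N : Matrix t t F) (f : s → t) (g : t → s) (hfg : ∀ x, f (g x) = x) :
    (N.submatrix f f).rank = N.rank := by
  refine le_antisymm (rank_submatrix_le' N f f) ?_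
  have : N = (N.submatrix f f).submatrix g g := by
    ext i j; simp [hfg]
  conv_lhs => rw [this]
  exact rank_submatrix_le' _ g g

lemma rank_conj_eq {F : Type*} [Field F] {n : Type*} [Fintype n] [DecidableEq n]
    (M U : Matrix n n F) (hU : U * U = 1) : (U * M * Uᵀ).rank = M.rank := by
  have hdet : IsUnit U.det := by
    have : U.det * U.det = 1 := by rw [← Matrix.det_mul, hU, Matrix.det_one]
    exact isUnit_iff_exists_inv.mpr ⟨_, this⟩
  have hdetT : IsUnit Uᵀ.det := by rwa [Matrix.det_transpose]
  rw [Matrix.rank_mul_eq_left_of_isUnit_det _ _ hdetT]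
  have : U * M = (Mᵀ * Uᵀ)ᵀ := by simp
  rw [this, Matrix.rank_transpose, Matrix.rank_mul_eq_left_of_isUnit_det _ _ hdetT,
    Matrix.rank_transpose]

section PivotLemmas
variable {V : Type u} (G : SimpleGraph V) (u v : V)

lemma pivotToggle_ne {x y : V} (h : pivotToggle G u v x y) :
    x ≠ u ∧ x ≠ v ∧ y ≠ u ∧ y ≠ v := by
  unfold pivotToggle pivotToggleHalf adjOnly adjBoth at h
  tauto

lemma pivot_adj_iff {x y : V} :
    (pivot G u v).Adj x y ↔ x ≠ y ∧
      ((pivotToggle G u v x y ∧ ¬ G.Adj x y) ∨ (¬ pivotToggle G u v x y ∧ G.Adj x y)) :=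
  Iff.rfl

lemma pivot_adj_of_endpoint {x y : V} (h : x = u ∨ x = v ∨ y = u ∨ y = v) :
    (pivot G u v).Adj x y ↔ G.Adj x y := by
  have hnt : ¬ pivotToggle G u v x y := fun ht => by
    have := pivotToggle_ne G u v ht; tauto
  rw [pivot_adj_iff]
  constructor
  · rintro ⟨-, (⟨ht, -⟩ | ⟨-, ha⟩)⟩
    · exact absurd ht hnt
    · exact ha
  · intro ha
    exact ⟨ha.ne, Or.inr ⟨hnt, ha⟩⟩

lemma pivotToggle_iff {x y : V} (hx : x ≠ u) (hx' : x ≠ v) (hy : y ≠ u) (hy' : y ≠ v) :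
    pivotToggle G u v x y ↔
      ((G.Adj u x ∧ G.Adj v y) ∧ ¬(G.Adj v x ∧ G.Adj u y)) ∨
        ((G.Adj v x ∧ G.Adj u y) ∧ ¬(G.Adj u x ∧ G.Adj v y)) := by
  by_cases h1 : G.Adj u x <;> by_cases h2 : G.Adj v x <;> by_cases h3 : G.Adj u y <;>
    by_cases h4 : G.Adj v y <;>
    simp [pivotToggle, pivotToggleHalf, adjOnly, adjBoth, hx, hx', hy, hy', h1, h2, h3, h4]

set_option maxHeartbeats 1000000 in
lemma adjM_pivot {x y : V} (hx : x ≠ u) (hx' : x ≠ v) (hy : y ≠ u) (hy' : y ≠ v) :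
    adjM (pivot G u v) x y =
      adjM G x y + adjM G u x * adjM G v y + adjM G v x * adjM G u y := by
  classical
  rcases eq_or_ne x y with rfl | hxy
  · rw [adjM_self, adjM_self]
    have : adjM G u x * adjM G v x + adjM G v x * adjM G u x = 0 := by
      rw [mul_comm (adjM G v x)]; ring_nf
      rw [show (2 : ZMod 2) = 0 by decide]; ring
    rw [zero_add, this]
  · have htog := pivotToggle_iff G u v hx hx' hy hy'
    simp only [adjM_eq_ite]
    by_cases h1 : G.Adj u x <;> by_cases h2 : G.Adj v x <;> by_cases h3 : G.Adj u y <;>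
      by_cases h4 : G.Adj v y <;> by_cases h5 : G.Adj x y <;>
      simp [pivot_adj_iff, hxy, htog, h1, h2, h3, h4, h5] <;> decide

end PivotLemmas

lemma z2_add_self (a : ZMod 2) : a + a = 0 := by fin_cases a <;> rfl

lemma z2_eq_of_add_eq_zero {a b : ZMod 2} (h : a + b = 0) : a = b := by
  revert a b; decide

lemma nullM_schur {n p : Type*} [Fintype n] [Fintype p] [DecidableEq n] [DecidableEq p]
    (A : Matrix n n (ZMod 2)) (hsym : ∀ i j, A i j = A j i) (u v : n) (huv : u ≠ v)
    (hAuv : A u v = 1) (huu : A u u = 0) (hvv : A v v = 0)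
    (f : p → n) (hfinj : Function.Injective f) (hfu : ∀ x, f x ≠ u) (hfv : ∀ x, f x ≠ v)
    (hsurj : ∀ x : n, x ≠ u → x ≠ v → ∃ y, f y = x)
    (D : Matrix p p (ZMod 2))
    (hD : ∀ s t, D s t = A (f s) (f t) + A (f s) u * A v (f t) + A (f s) v * A u (f t)) :
    nullM A = nullM D := by
  classical
  -- decomposition of sums over `n`
  have huniv : (Finset.univ : Finset n) = insert u (insert v (Finset.univ.image f)) := by
    ext z
    simp only [Finset.mem_univ, true_iff, Finset.mem_insert, Finset.mem_image]
    by_cases hz : z = u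
    · exact Or.inl hz
    · by_cases hz' : z = v
      · exact Or.inr (Or.inl hz')
      · obtain ⟨y, hy⟩ := hsurj z hz hz'
        exact Or.inr (Or.inr ⟨y, by simp, hy⟩)
  have hsum : ∀ g : n → ZMod 2, ∑ z, g z = g u + g v + ∑ t, g (f t) := by
    intro g
    rw [huniv, Finset.sum_insert, Finset.sum_insert, Finset.sum_image]
    · ring
    · intro a _ b _ h; exact hfinj h
    · simp only [Finset.mem_image, not_exists]
      intro a; simp [hfv a]
    · simp only [Finset.mem_insert, Finset.mem_image]
      push_neg
      exact ⟨huv, fun a _ => hfu a⟩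
  -- the two comparison matrices
  set φM : Matrix p n (ZMod 2) := pick f with hφM
  set ψM : Matrix n p (ZMod 2) :=
    Matrix.of (fun z t => if z = u then A v (f t) else if z = v then A u (f t)
      else if f t = z then 1 else 0) with hψM
  have hφ : ∀ x : n → ZMod 2, ∀ s, φM.mulVecLin x s = x (f s) := by
    intro x s
    simp [hφM, pick, mulVecLin_apply, mulVec, dotProduct]
  have hψu : ∀ y : p → ZMod 2, ψM.mulVecLin y u = ∑ t, A v (f t) * y t := by
    intro y; simp [hψM, mulVecLin_apply, mulVec, dotProduct]
  have hψv : ∀ y : p → ZMod 2, ψM.mulVecLin y v = ∑ t, A u (f t) * y t := by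
    intro y; simp [hψM, mulVecLin_apply, mulVec, dotProduct, huv.symm]
  have hψf : ∀ y : p → ZMod 2, ∀ s, ψM.mulVecLin y (f s) = y s := by
    intro y s
    simp only [hψM, mulVecLin_apply, mulVec, dotProduct, Matrix.of_apply]
    rw [Finset.sum_eq_single s]
    · simp [hfu s, hfv s]
    · intro t _ hts
      simp [hfu s, hfv s, hfinj.ne hts]
    · intro h; exact absurd (Finset.mem_univ s) h
  -- membership conditions for kernels
  have hkerA : ∀ x : n → ZMod 2, x ∈ LinearMap.ker A.mulVecLin ↔
      ∀ w, ∑ z, A w z * x z = 0 := by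
    intro x
    simp only [LinearMap.mem_ker, mulVecLin_apply]
    constructor
    · intro h w; have := congrFun h w; simpa [mulVec, dotProduct] using this
    · intro h; funext w; simpa [mulVec, dotProduct] using h w
  have hkerD : ∀ y : p → ZMod 2, y ∈ LinearMap.ker D.mulVecLin ↔
      ∀ w, ∑ t, D w t * y t = 0 := by
    intro y
    simp only [LinearMap.mem_ker, mulVecLin_apply]
    constructor
    · intro h w; have := congrFun h w; simpa [mulVec, dotProduct] using this
    · intro h; funext w; simpa [mulVec, dotProduct] using h w
  -- key consequences for x in ker A
  have hxv : ∀ x ∈ LinearMap.ker A.mulVecLin, x v = ∑ t, A u (f t) * x (f t) := by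
    intro x hx
    have h := (hkerA x).1 hx u
    rw [hsum (fun z => A u z * x z)] at h
    have h2 : x v + ∑ t, A u (f t) * x (f t) = 0 := by
      linear_combination h - x u * huu - x v * hAuv
    exact z2_eq_of_add_eq_zero h2
  have hxu : ∀ x ∈ LinearMap.ker A.mulVecLin, x u = ∑ t, A v (f t) * x (f t) := by
    intro x hx
    have h := (hkerA x).1 hx v
    rw [hsum (fun z => A v z * x z)] at h
    have hAvu : A v u = 1 := by rw [hsym]; exact hAuv
    have h2 : x u + ∑ t, A v (f t) * x (f t) = 0 := by
      linear_combination h - x v * hvv - x u * hAvu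
    exact z2_eq_of_add_eq_zero h2
  -- forward: restriction maps ker A to ker D
  have hfwd : ∀ x ∈ LinearMap.ker A.mulVecLin, φM.mulVecLin x ∈ LinearMap.ker D.mulVecLin := by
    intro x hx
    rw [hkerD]
    intro s
    have hrow := (hkerA x).1 hx (f s)
    rw [hsum (fun z => A (f s) z * x z)] at hrow
    have expand : ∀ t, D s t * x (f t) =
        A (f s) (f t) * x (f t) + A (f s) u * (A v (f t) * x (f t))
          + A (f s) v * (A u (f t) * x (f t)) := by
      intro t; rw [hD]; ring
    calc ∑ t, D s t * (φM.mulVecLin x) t = ∑ t, D s t * x (f t) := by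
          simp only [hφ]
      _ = (∑ t, A (f s) (f t) * x (f t)) + A (f s) u * (∑ t, A v (f t) * x (f t))
            + A (f s) v * (∑ t, A u (f t) * x (f t)) := by
          simp only [expand, Finset.sum_add_distrib, Finset.mul_sum]
      _ = (∑ t, A (f s) (f t) * x (f t)) + A (f s) u * x u + A (f s) v * x v := by
          rw [hxu x hx, hxv x hx]
      _ = 0 := by rw [← hrow]; ring
  -- forward injectivity on ker A
  have hfwdinj : ∀ x ∈ LinearMap.ker A.mulVecLin, φM.mulVecLin x = 0 → x = 0 := by
    intro x hx h0
    have hf0 : ∀ s, x (f s) = 0 := by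
      intro s; have := congrFun h0 s; rwa [hφ] at this
    funext z
    by_cases hz : z = u
    · subst hz; rw [hxu x hx]; simp [hf0]
    · by_cases hz' : z = v
      · subst hz'; rw [hxv x hx]; simp [hf0]
      · obtain ⟨s, rfl⟩ := hsurj z hz hz'
        exact hf0 s
  -- backward: ψ maps ker D into ker A
  have hbwd : ∀ y ∈ LinearMap.ker D.mulVecLin, ψM.mulVecLin y ∈ LinearMap.ker A.mulVecLin := by
    intro y hy
    rw [hkerA]
    intro w
    set x := ψM.mulVecLin y with hxdef
    have hxfs : ∀ s, x (f s) = y s := hψf y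
    have hxu' : x u = ∑ t, A v (f t) * y t := hψu y
    have hxv' : x v = ∑ t, A u (f t) * y t := hψv y
    rw [hsum (fun z => A w z * x z)]
    simp only [hxfs]
    by_cases hw : w = u
    · rw [hw]
      calc A u u * x u + A u v * x v + ∑ t, A u (f t) * y t
          = x v + ∑ t, A u (f t) * y t := by rw [huu, hAuv]; ring
        _ = (∑ t, A u (f t) * y t) + ∑ t, A u (f t) * y t := by rw [hxv']
        _ = 0 := z2_add_self _
    · by_cases hw' : w = v
      · rw [hw']
        have hAvu : A v u = 1 := by rw [hsym]; exact hAuv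
        calc A v u * x u + A v v * x v + ∑ t, A v (f t) * y t
            = x u + ∑ t, A v (f t) * y t := by rw [hvv, hAvu]; ring
          _ = (∑ t, A v (f t) * y t) + ∑ t, A v (f t) * y t := by rw [hxu']
          _ = 0 := z2_add_self _
      · obtain ⟨s, rfl⟩ := hsurj w hw hw'
        have hrow := (hkerD y).1 hy s
        have expand : ∀ t, D s t * y t =
            A (f s) (f t) * y t + A (f s) u * (A v (f t) * y t)
              + A (f s) v * (A u (f t) * y t) := by
          intro t; rw [hD]; ring
        calc A (f s) u * x u + A (f s) v * x v + ∑ t, A (f s) (f t) * y t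
            = (∑ t, A (f s) (f t) * y t) + A (f s) u * (∑ t, A v (f t) * y t)
              + A (f s) v * (∑ t, A u (f t) * y t) := by rw [hxu', hxv']; ring
          _ = ∑ t, D s t * y t := by
              simp only [expand, Finset.sum_add_distrib, Finset.mul_sum]
          _ = 0 := hrow
  have hbwdinj : ∀ y : p → ZMod 2, ψM.mulVecLin y = 0 → y = 0 := by
    intro y h0
    funext s
    have := congrFun h0 (f s)
    rwa [hψf] at this
  -- conclude by double inequality of finranks
  refine le_antisymm
    (LinearMap.finrank_le_finrank_of_injective (f := (φM.mulVecLin).restrict hfwd) ?_)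
    (LinearMap.finrank_le_finrank_of_injective (f := (ψM.mulVecLin).restrict hbwd) ?_)
  · intro a b hab
    ext1
    have hval : φM.mulVecLin a.1 = φM.mulVecLin b.1 := by
      have := congrArg Subtype.val hab
      simpa [LinearMap.restrict_apply] using this
    have h0 : φM.mulVecLin (a.1 - b.1) = 0 := by rw [map_sub, hval, sub_self]
    have hmem : (a.1 - b.1) ∈ LinearMap.ker A.mulVecLin := sub_mem a.2 b.2
    exact sub_eq_zero.mp (hfwdinj _ hmem h0)
  · intro a b hab
    ext1
    have hval : ψM.mulVecLin a.1 = ψM.mulVecLin b.1 := by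
      have := congrArg Subtype.val hab
      simpa [LinearMap.restrict_apply] using this
    have h0 : ψM.mulVecLin (a.1 - b.1) = 0 := by rw [map_sub, hval, sub_self]
    exact sub_eq_zero.mp (hbwdinj _ h0)

section RankPivot
variable {V : Type u} [Fintype V] [DecidableEq V]

lemma adjM_pivot_endpoint (G : SimpleGraph V) (u v : V) {x y : V}
    (h : x = u ∨ x = v ∨ y = u ∨ y = v) :
    adjM (pivot G u v) x y = adjM G x y := by
  by_cases ha : G.Adj x y
  · rw [adjM_of_adj ((pivot_adj_of_endpoint G u v h).2 ha), adjM_of_adj ha]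
  · rw [adjM_of_not_adj (fun hp => ha ((pivot_adj_of_endpoint G u v h).1 hp)),
      adjM_of_not_adj ha]

lemma rankIn_eq_rank (G : SimpleGraph V) (S : Finset V) :
    rankIn G S = ((adjM G).submatrix (fun i : S => (i : V)) (fun i : S => (i : V))).rank := rfl

lemma rankIn_pivot (G : SimpleGraph V) (u v : V) (T : Finset V) (hv : v ∈ T) (hu : u ∉ T) :
    rankIn (pivot G u v) T = rankIn G T := by
  classical
  rw [rankIn_eq_rank, rankIn_eq_rank]
  set M : Matrix T T (ZMod 2) :=
    (adjM G).submatrix (fun i : T => (i : V)) (fun i : T => (i : V)) with hM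
  set vt : T := ⟨v, hv⟩ with hvt
  set c : T → ZMod 2 := fun x => if (x : V) = v then 0 else adjM G (x : V) u with hc
  set d : T → ZMod 2 := fun y => if y = vt then 1 else 0 with hd
  have hcv : c vt = 0 := by simp [hc, hvt]
  have hMvv : M vt vt = 0 := by simp [hM, hvt, adjM_self]
  have hAA : vecMulVec c d * vecMulVec c d = 0 := by
    ext i j
    rw [Matrix.mul_apply]
    refine Finset.sum_eq_zero fun k _ => ?_
    by_cases h : k = vt
    · subst h
      simp [vecMulVec_apply, hcv]
    · simp [vecMulVec_apply, hd, h]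
  have hself : vecMulVec c d + vecMulVec c d = 0 := by
    ext i j
    exact z2_add_self _
  set U : Matrix T T (ZMod 2) := 1 + vecMulVec c d with hU
  have hUU : U * U = 1 := by
    rw [hU]
    have : (1 + vecMulVec c d) * (1 + vecMulVec c d) =
        1 + (vecMulVec c d + vecMulVec c d) + vecMulVec c d * vecMulVec c d := by
      noncomm_ring
    rw [this, hself, hAA, add_zero, add_zero]
  have hAM : ∀ i j, (vecMulVec c d * M) i j = c i * M vt j := by
    intro i j
    rw [Matrix.mul_apply]
    rw [Finset.sum_eq_single vt]
    · simp [vecMulVec_apply, hd]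
    · intro k _ hk; simp [vecMulVec_apply, hd, hk]
    · simp
  have hMA : ∀ (X : Matrix T T (ZMod 2)), ∀ i j,
      (X * (vecMulVec c d)ᵀ) i j = X i vt * c j := by
    intro X i j
    rw [Matrix.mul_apply]
    rw [Finset.sum_eq_single vt]
    · simp [vecMulVec_apply, hd, mul_comm]
    · intro k _ hk; simp [vecMulVec_apply, hd, hk]
    · simp
  have key : (adjM (pivot G u v)).submatrix (fun i : T => (i : V)) (fun i : T => (i : V))
      = U * M * Uᵀ := by
    have expand : U * M * Uᵀ =
        M + vecMulVec c d * M + M * (vecMulVec c d)ᵀ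
          + vecMulVec c d * M * (vecMulVec c d)ᵀ := by
      rw [hU, Matrix.transpose_add, Matrix.transpose_one]
      noncomm_ring
    rw [expand]
    ext i j
    have hiu : (i : V) ≠ u := fun h => hu (h ▸ i.2)
    have hju : (j : V) ≠ u := fun h => hu (h ▸ j.2)
    simp only [Matrix.add_apply, Matrix.submatrix_apply]
    rw [hAM, hMA M, hMA (vecMulVec c d * M), hAM, hMvv]
    have hMij : M i j = adjM G (i : V) (j : V) := rfl
    have hMvj : M vt j = adjM G v (j : V) := rfl
    have hMiv : M i vt = adjM G (i : V) v := rfl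
    rw [hMij, hMvj, hMiv]
    by_cases hi : (i : V) = v
    · have hci : c i = 0 := by simp [hc, hi]
      rw [hci, adjM_pivot_endpoint G u v (Or.inr (Or.inl hi)), hi, adjM_self]
      ring
    · by_cases hj : (j : V) = v
      · have hcj : c j = 0 := by simp [hc, hj]
        rw [hcj, adjM_pivot_endpoint G u v (Or.inr (Or.inr (Or.inr hj))), hj, adjM_self]
        ring
      · have hci : c i = adjM G (i : V) u := by simp [hc, hi]
        have hcj : c j = adjM G (j : V) u := by simp [hc, hj]
        rw [hci, hcj, adjM_pivot G u v hiu hi hju hj,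
          adjM_symm G u (i : V), adjM_symm G v (i : V), adjM_symm G u (j : V)]
        ring
  rw [key]
  exact rank_conj_eq M U hUU

end RankPivot


section Transport
variable {V : Type u}

lemma addFalseTwin_adj_some (G : SimpleGraph V) (v : V) (a b : V) :
    (addFalseTwin G v).Adj (some a) (some b) ↔ G.Adj a b := by
  rw [addFalseTwin, SimpleGraph.fromRel_adj]
  constructor
  · rintro ⟨hne, (⟨c, h, -⟩ | ⟨c, d, hc, hd, h⟩) | (⟨c, h, -⟩ | ⟨c, d, hc, hd, h⟩)⟩
    · exact absurd h (by simp)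
    · cases Option.some.inj hc; cases Option.some.inj hd; exact h
    · exact absurd h (by simp)
    · cases Option.some.inj hc; cases Option.some.inj hd; exact h.symm
  · intro h
    exact ⟨by simpa using h.ne, Or.inl (Or.inr ⟨a, b, rfl, rfl, h⟩)⟩

lemma addFalseTwin_adj_none (G : SimpleGraph V) (v : V) (b : V) :
    (addFalseTwin G v).Adj none (some b) ↔ G.Adj v b := by
  rw [addFalseTwin, SimpleGraph.fromRel_adj]
  constructor
  · rintro ⟨hne, (⟨c, -, hc, h⟩ | ⟨c, d, hc, -, -⟩) | (⟨c, -, hc, -⟩ | ⟨c, d, -, hd, -⟩)⟩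
    · cases Option.some.inj hc; exact h
    · exact absurd hc (by simp)
    · exact absurd hc (by simp)
    · exact absurd hd (by simp)
  · intro h
    exact ⟨by simp, Or.inl (Or.inl ⟨b, rfl, rfl, h⟩)⟩

lemma addFalseTwin_adj_none' (G : SimpleGraph V) (v : V) (b : V) :
    (addFalseTwin G v).Adj (some b) none ↔ G.Adj v b := by
  rw [SimpleGraph.adj_comm]; exact addFalseTwin_adj_none G v b

lemma delVert_adj (G : SimpleGraph V) (u : V) (x y : {z : V // z ≠ u}) :
    (delVert G u).Adj x y ↔ G.Adj (x : V) (y : V) := Iff.rfl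

variable {W : Type u}

lemma rankIn_congr [Fintype V] [Fintype W] (G : SimpleGraph V) (H : SimpleGraph W)
    (S : Finset V) (T : Finset W) (f : {x // x ∈ S} → {x // x ∈ T})
    (hbij : Function.Bijective f)
    (hadj : ∀ x y : {x // x ∈ S}, G.Adj (x : V) (y : V) ↔ H.Adj ((f x) : W) ((f y) : W)) :
    rankIn G S = rankIn H T := by
  classical
  rw [rankIn_eq_rank, rankIn_eq_rank]
  let e := Equiv.ofBijective f hbij
  have hmat : (adjM G).submatrix (fun i : S => (i : V)) (fun i : S => (i : V)) =
      ((adjM H).submatrix (fun i : T => (i : W)) (fun i : T => (i : W))).submatrix e e := by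
    ext x y
    simp only [Matrix.submatrix_apply]
    by_cases h : G.Adj (x : V) (y : V)
    · rw [adjM_of_adj h]; exact (adjM_of_adj ((hadj x y).1 h)).symm
    · rw [adjM_of_not_adj h]
      exact (adjM_of_not_adj fun h' => h ((hadj x y).2 h')).symm
  rw [hmat, Matrix.rank_submatrix]

lemma rankIn_le_card [Fintype V] (G : SimpleGraph V) (S : Finset V) :
    rankIn G S ≤ S.card := by
  classical
  rw [rankIn_eq_rank]
  have := Matrix.rank_le_card_width
    ((adjM G).submatrix (fun i : S => (i : V)) (fun i : S => (i : V)))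
  rwa [Fintype.card_coe] at this

end Transport


section Terms
variable {V : Type u} [Fintype V] [DecidableEq V]

lemma adjM_addFalseTwin (G : SimpleGraph V) (v : V) (yo zo : Option V) :
    adjM (addFalseTwin G v) yo zo = adjM G (yo.getD v) (zo.getD v) := by
  have key : ∀ yo zo : Option V,
      ((addFalseTwin G v).Adj yo zo ↔ G.Adj (yo.getD v) (zo.getD v)) ∨
        (¬ (addFalseTwin G v).Adj yo zo ∧ ¬ G.Adj (yo.getD v) (zo.getD v)) := by
    rintro (_ | a) (_ | b)
    · exact Or.inr ⟨SimpleGraph.irrefl _, SimpleGraph.irrefl _⟩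
    · exact Or.inl (addFalseTwin_adj_none G v b)
    · exact Or.inl ((addFalseTwin_adj_none' G v a).trans (G.adj_comm v a))
    · exact Or.inl (addFalseTwin_adj_some G v a b)
  rcases key yo zo with h | ⟨h1, h2⟩
  · by_cases ha : (addFalseTwin G v).Adj yo zo
    · rw [adjM_of_adj ha, adjM_of_adj (h.1 ha)]
    · rw [adjM_of_not_adj ha, adjM_of_not_adj (fun h' => ha (h.2 h'))]
  · rw [adjM_of_not_adj h1, adjM_of_not_adj h2]

lemma rankIn_map_some (G : SimpleGraph V) (v : V) (T : Finset V) :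
    rankIn (addFalseTwin G v) (T.map Function.Embedding.some) = rankIn G T := by
  refine (rankIn_congr G (addFalseTwin G v) T (T.map Function.Embedding.some)
    (fun x => ⟨some x.1, Finset.mem_map_of_mem _ x.2⟩) ⟨?_, ?_⟩ ?_).symm
  · intro a b h
    exact Subtype.ext (Option.some.inj (congrArg Subtype.val h))
  · rintro ⟨y, hy⟩
    rw [Finset.mem_map] at hy
    obtain ⟨a, ha, rfl⟩ := hy
    exact ⟨⟨a, ha⟩, rfl⟩
  · intro x y
    exact (addFalseTwin_adj_some G v x.1 y.1).symm

lemma rankIn_insert_none_not_mem (G : SimpleGraph V) (v : V) (T : Finset V) (hv : v ∉ T) :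
    rankIn (addFalseTwin G v) (insert none (T.map Function.Embedding.some)) =
      rankIn G (insert v T) := by
  have hmem : ∀ x : {x // x ∈ insert v T}, (x : V) ≠ v → (x : V) ∈ T := by
    intro x hx
    rcases Finset.mem_insert.1 x.2 with h | h
    · exact absurd h hx
    · exact h
  refine (rankIn_congr G (addFalseTwin G v) (insert v T)
    (insert none (T.map Function.Embedding.some))
    (fun x => if h : (x : V) = v then ⟨none, Finset.mem_insert_self _ _⟩
      else ⟨some x.1, Finset.mem_insert_of_mem (Finset.mem_map_of_mem _ (hmem x h))⟩)
    ⟨?_, ?_⟩ ?_).symm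
  · intro a b hab
    dsimp only at hab
    by_cases ha : (a : V) = v <;> by_cases hb : (b : V) = v
    · exact Subtype.ext (ha.trans hb.symm)
    · rw [dif_pos ha, dif_neg hb] at hab
      exact absurd (congrArg Subtype.val hab) (by simp)
    · rw [dif_neg ha, dif_pos hb] at hab
      exact absurd (congrArg Subtype.val hab) (by simp)
    · rw [dif_neg ha, dif_neg hb] at hab
      exact Subtype.ext (Option.some.inj (congrArg Subtype.val hab))
  · rintro ⟨y, hy⟩
    rcases Finset.mem_insert.1 hy with h | h
    · subst h
      exact ⟨⟨v, Finset.mem_insert_self _ _⟩, Subtype.ext (by dsimp only; rw [dif_pos rfl])⟩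
    · rw [Finset.mem_map] at h
      obtain ⟨a, ha, rfl⟩ := h
      have hav : a ≠ v := fun h => hv (h ▸ ha)
      exact ⟨⟨a, Finset.mem_insert_of_mem ha⟩, Subtype.ext (by dsimp only; rw [dif_neg hav]; rfl)⟩
  · intro x y
    by_cases hx : (x : V) = v <;> by_cases hy' : (y : V) = v
    · rw [dif_pos hx, dif_pos hy']
      simp only [hx, hy']
      constructor
      · intro h; exact absurd h (SimpleGraph.irrefl G)
      · intro h; exact absurd h (SimpleGraph.irrefl _)
    · rw [dif_pos hx, dif_neg hy']
      rw [hx]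
      exact (addFalseTwin_adj_none G v y.1).symm
    · rw [dif_neg hx, dif_pos hy']
      rw [hy', SimpleGraph.adj_comm]
      exact (addFalseTwin_adj_none' G v x.1).symm
    · rw [dif_neg hx, dif_neg hy']
      exact (addFalseTwin_adj_some G v x.1 y.1).symm

lemma rankIn_insert_none_mem (G : SimpleGraph V) (v : V) (T : Finset V) (hv : v ∈ T) :
    rankIn (addFalseTwin G v) (insert none (T.map Function.Embedding.some)) =
      rankIn G T := by
  classical
  rw [rankIn_eq_rank, rankIn_eq_rank]
  set N : Matrix T T (ZMod 2) :=
    (adjM G).submatrix (fun i : T => (i : V)) (fun i : T => (i : V)) with hN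
  have hmemf : ∀ y : {x // x ∈ insert none (T.map Function.Embedding.some)},
      (y : Option V).getD v ∈ T := by
    rintro ⟨yo, hyo⟩
    rcases Finset.mem_insert.1 hyo with h | h
    · subst h; exact hv
    · rw [Finset.mem_map] at h
      obtain ⟨a, ha, rfl⟩ := h
      exact ha
  set f : {x // x ∈ insert none (T.map Function.Embedding.some)} → {x // x ∈ T} :=
    fun y => ⟨(y : Option V).getD v, hmemf y⟩ with hf
  set g : {x // x ∈ T} → {x // x ∈ insert none (T.map Function.Embedding.some)} :=
    fun x => ⟨some x.1, Finset.mem_insert_of_mem (Finset.mem_map_of_mem _ x.2)⟩ with hg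
  have hfg : ∀ x, f (g x) = x := fun x => Subtype.ext rfl
  have hmat : (adjM (addFalseTwin G v)).submatrix
      (fun i : (insert none (T.map Function.Embedding.some) : Finset (Option V)) => (i : Option V))
      (fun i : (insert none (T.map Function.Embedding.some) : Finset (Option V)) => (i : Option V))
      = N.submatrix f f := by
    ext y z
    simp only [Matrix.submatrix_apply, hN, hf]
    exact adjM_addFalseTwin G v y.1 z.1
  rw [hmat]
  exact rank_submatrix_surj N f g hfg

lemma nullity_pivot_both (G : SimpleGraph V) {u v : V} (huv : G.Adj u v) (T : Finset V)
    (hu : u ∈ T) (hv : v ∈ T) :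
    T.card - rankIn G T =
      ((T.erase u).erase v).card - rankIn (pivot G u v) ((T.erase u).erase v) := by
  classical
  have hne : u ≠ v := G.ne_of_adj huv
  set S : Finset V := (T.erase u).erase v with hS
  have hmemS : ∀ x : {x // x ∈ S}, (x : V) ∈ T := by
    intro x
    exact Finset.mem_of_mem_erase (Finset.mem_of_mem_erase x.2)
  have hSnu : ∀ x : {x // x ∈ S}, (x : V) ≠ u := by
    intro x
    exact (Finset.mem_erase.1 (Finset.mem_of_mem_erase x.2)).1
  have hSnv : ∀ x : {x // x ∈ S}, (x : V) ≠ v := by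
    intro x
    exact (Finset.mem_erase.1 x.2).1
  rw [rankIn_eq_rank, rankIn_eq_rank]
  have h1 : T.card = Fintype.card {x // x ∈ T} := (Fintype.card_coe T).symm
  have h2 : S.card = Fintype.card {x // x ∈ S} := (Fintype.card_coe S).symm
  rw [h1, h2, card_sub_rank, card_sub_rank]
  set A : Matrix T T (ZMod 2) :=
    (adjM G).submatrix (fun i : T => (i : V)) (fun i : T => (i : V)) with hA
  set D : Matrix S S (ZMod 2) :=
    (adjM (pivot G u v)).submatrix (fun i : S => (i : V)) (fun i : S => (i : V)) with hD
  refine nullM_schur A ?_ ⟨u, hu⟩ ⟨v, hv⟩ ?_ ?_ ?_ ?_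
    (fun (x : {x // x ∈ S}) => (⟨(x : V), hmemS x⟩ : {x // x ∈ T})) ?_ ?_ ?_ ?_ D ?_
  · intro i j; exact adjM_symm G _ _
  · intro h; exact hne (congrArg Subtype.val h)
  · exact adjM_of_adj huv
  · exact adjM_self G u
  · exact adjM_self G v
  · intro a b h
    dsimp only at h
    exact Subtype.ext (Subtype.mk.inj h)
  · intro x h
    exact hSnu x (Subtype.mk.inj h)
  · intro x h
    exact hSnv x (Subtype.mk.inj h)
  · intro x hxu hxv
    have hx1 : (x : V) ≠ u := fun h => hxu (Subtype.ext h)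
    have hx2 : (x : V) ≠ v := fun h => hxv (Subtype.ext h)
    have : (x : V) ∈ S := Finset.mem_erase.2 ⟨hx2, Finset.mem_erase.2 ⟨hx1, x.2⟩⟩
    exact ⟨⟨(x : V), this⟩, Subtype.ext rfl⟩
  · intro s t
    simp only [hD, hA, Matrix.submatrix_apply]
    rw [adjM_pivot G u v (hSnu s) (hSnv s) (hSnu t) (hSnv t),
      adjM_symm G u (s : V), adjM_symm G v (s : V)]

end Terms


section Assembly
variable {V : Type u} [Fintype V] [DecidableEq V]

lemma qNull_addFalseTwin_split (G : SimpleGraph V) (v : V) :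
    qNull (addFalseTwin G v) =
      qNull G + Polynomial.X *
        ∑ T ∈ Finset.univ.filter (fun T : Finset V => v ∈ T),
          ((X : Polynomial ℤ) - 1) ^ (T.card - rankIn G T) := by
  classical
  have h1 : qNull (addFalseTwin G v) =
      (∑ S ∈ Finset.univ.filter (fun S : Finset (Option V) => none ∈ S),
        ((X : Polynomial ℤ) - 1) ^ (S.card - rankIn (addFalseTwin G v) S)) +
      ∑ S ∈ Finset.univ.filter (fun S : Finset (Option V) => ¬ none ∈ S),
        ((X : Polynomial ℤ) - 1) ^ (S.card - rankIn (addFalseTwin G v) S) := by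
    rw [qNull]
    exact (Finset.sum_filter_add_sum_filter_not Finset.univ
      (fun S : Finset (Option V) => none ∈ S) _).symm
  have h2 : ∑ S ∈ Finset.univ.filter (fun S : Finset (Option V) => ¬ none ∈ S),
      ((X : Polynomial ℤ) - 1) ^ (S.card - rankIn (addFalseTwin G v) S) = qNull G := by
    rw [qNull]
    refine (Finset.sum_nbij' (fun T : Finset V => T.map Function.Embedding.some)
      (fun S : Finset (Option V) => Finset.univ.filter (fun a : V => some a ∈ S))
      ?_ ?_ ?_ ?_ ?_).symm
    · intro T _
      simp [Finset.mem_filter, Finset.mem_map]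
    · intro S _
      exact Finset.mem_univ _
    · intro T _
      ext a
      simp
    · intro S hS
      rw [Finset.mem_filter] at hS
      ext y
      match y with
      | none => simp [hS.2]
      | some a => simp
    · intro T _
      rw [Finset.card_map, rankIn_map_some]
  have h3 : ∑ S ∈ Finset.univ.filter (fun S : Finset (Option V) => none ∈ S),
      ((X : Polynomial ℤ) - 1) ^ (S.card - rankIn (addFalseTwin G v) S) =
      ∑ T : Finset V, ((X : Polynomial ℤ) - 1) ^
        ((insert none (T.map Function.Embedding.some)).card -
          rankIn (addFalseTwin G v) (insert none (T.map Function.Embedding.some))) := by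
    refine (Finset.sum_nbij'
      (fun T : Finset V => insert none (T.map Function.Embedding.some))
      (fun S : Finset (Option V) => Finset.univ.filter (fun a : V => some a ∈ S))
      ?_ ?_ ?_ ?_ ?_).symm
    · intro T _
      simp [Finset.mem_filter]
    · intro S _
      exact Finset.mem_univ _
    · intro T _
      ext a
      simp
    · intro S hS
      rw [Finset.mem_filter] at hS
      ext y
      match y with
      | none => simp [hS.2]
      | some a => simp
    · intro T _
      rfl
  have h4 : ∑ T : Finset V, ((X : Polynomial ℤ) - 1) ^
        ((insert none (T.map Function.Embedding.some)).card -
          rankIn (addFalseTwin G v) (insert none (T.map Function.Embedding.some))) =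
      (((X : Polynomial ℤ) - 1) *
        ∑ T ∈ Finset.univ.filter (fun T : Finset V => v ∈ T),
          ((X : Polynomial ℤ) - 1) ^ (T.card - rankIn G T)) +
      ∑ T ∈ Finset.univ.filter (fun T : Finset V => v ∈ T),
        ((X : Polynomial ℤ) - 1) ^ (T.card - rankIn G T) := by
    rw [← Finset.sum_filter_add_sum_filter_not Finset.univ (fun T : Finset V => v ∈ T)]
    congr 1
    · -- v ∈ T : duplicate-row case, picks up a factor (X-1)
      rw [Finset.mul_sum]
      refine Finset.sum_congr rfl ?_
      intro T hT
      rw [Finset.mem_filter] at hT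
      have hcard : (insert none (T.map Function.Embedding.some)).card = T.card + 1 := by
        rw [Finset.card_insert_of_notMem (by simp), Finset.card_map]
      rw [hcard, rankIn_insert_none_mem G v T hT.2]
      have hle := rankIn_le_card G T
      have : T.card + 1 - rankIn G T = (T.card - rankIn G T) + 1 := by omega
      rw [this, pow_succ]
      ring
    · -- v ∉ T : becomes sum over sets containing v
      refine Finset.sum_nbij' (fun T : Finset V => insert v T)
        (fun T : Finset V => T.erase v) ?_ ?_ ?_ ?_ ?_
      · intro T hT
        rw [Finset.mem_filter] at hT ⊢
        exact ⟨Finset.mem_univ _, Finset.mem_insert_self _ _⟩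
      · intro T hT
        rw [Finset.mem_filter] at hT ⊢
        exact ⟨Finset.mem_univ _, Finset.notMem_erase _ _⟩
      · intro T hT
        rw [Finset.mem_filter] at hT
        exact Finset.erase_insert hT.2
      · intro T hT
        rw [Finset.mem_filter] at hT
        exact Finset.insert_erase hT.2
      · intro T hT
        rw [Finset.mem_filter] at hT
        have hcard : (insert none (T.map Function.Embedding.some)).card = T.card + 1 := by
          rw [Finset.card_insert_of_notMem (by simp), Finset.card_map]
        rw [hcard, rankIn_insert_none_not_mem G v T hT.2,
          Finset.card_insert_of_notMem hT.2]
  rw [h1, h2, h3, h4]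
  ring

end Assembly


section Assembly2
variable {V : Type u} [Fintype V] [DecidableEq V]

lemma rankIn_delVert (H : SimpleGraph V) (u : V) (S' : Finset {x : V // x ≠ u}) :
    rankIn (delVert H u) S' =
      rankIn H (S'.map ⟨Subtype.val, Subtype.val_injective⟩) := by
  refine rankIn_congr (delVert H u) H S' (S'.map ⟨Subtype.val, Subtype.val_injective⟩)
    (fun x => ⟨(x : {x : V // x ≠ u}).1, Finset.mem_map_of_mem _ x.2⟩) ⟨?_, ?_⟩ ?_
  · intro a b h
    dsimp only at h
    exact Subtype.ext (Subtype.ext (Subtype.mk.inj h))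
  · rintro ⟨y, hy⟩
    rw [Finset.mem_map] at hy
    obtain ⟨a, ha, rfl⟩ := hy
    exact ⟨⟨a, ha⟩, rfl⟩
  · intro x y
    exact Iff.rfl

lemma qNull_delVert_pivot (G : SimpleGraph V) {u v : V} (huv : G.Adj u v) :
    qNull (delVert (pivot G u v) u) =
      ∑ T ∈ Finset.univ.filter (fun T : Finset V => v ∈ T),
        ((X : Polynomial ℤ) - 1) ^ (T.card - rankIn G T) := by
  classical
  have hne : u ≠ v := G.ne_of_adj huv
  set H := pivot G u v with hH
  have h0 : qNull (delVert H u) =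
      ∑ T ∈ Finset.univ.filter (fun T : Finset V => u ∉ T),
        ((X : Polynomial ℤ) - 1) ^ (T.card - rankIn H T) := by
    rw [qNull]
    refine Finset.sum_nbij'
      (fun S' : Finset {x : V // x ≠ u} => S'.map ⟨Subtype.val, Subtype.val_injective⟩)
      (fun T : Finset V => Finset.univ.filter (fun w : {x : V // x ≠ u} => (w : V) ∈ T))
      ?_ ?_ ?_ ?_ ?_
    · intro S' _
      rw [Finset.mem_filter]
      refine ⟨Finset.mem_univ _, ?_⟩
      rw [Finset.mem_map]
      rintro ⟨w, -, hw⟩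
      exact w.2 hw
    · intro T _
      exact Finset.mem_univ _
    · intro S' _
      ext w
      simp only [Finset.mem_filter, Finset.mem_univ, true_and, Finset.mem_map,
        Function.Embedding.coeFn_mk]
      constructor
      · rintro ⟨w', hw', h⟩
        rwa [show w' = w from Subtype.ext h] at hw'
      · intro h
        exact ⟨w, h, rfl⟩
    · intro T hT
      rw [Finset.mem_filter] at hT
      ext a
      simp only [Finset.mem_map, Finset.mem_filter, Finset.mem_univ, true_and,
        Function.Embedding.coeFn_mk]
      constructor
      · rintro ⟨w, hw, h⟩
        exact h ▸ hw
      · intro ha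
        exact ⟨⟨a, fun h => hT.2 (h ▸ ha)⟩, ha, rfl⟩
    · intro S' _
      rw [Finset.card_map, rankIn_delVert]
  rw [h0]
  rw [← Finset.sum_filter_add_sum_filter_not
    (Finset.univ.filter (fun T : Finset V => u ∉ T)) (fun T : Finset V => v ∈ T)]
  rw [← Finset.sum_filter_add_sum_filter_not
    (Finset.univ.filter (fun T : Finset V => v ∈ T)) (fun T : Finset V => u ∈ T)]
  rw [add_comm (∑ T ∈ (Finset.univ.filter (fun T : Finset V => v ∈ T)).filter
    (fun T : Finset V => u ∈ T), ((X : Polynomial ℤ) - 1) ^ (T.card - rankIn G T))]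
  congr 1
  · -- v ∈ T, u ∉ T : pivot preserves rank
    refine Finset.sum_nbij' (fun T : Finset V => T) (fun T : Finset V => T) ?_ ?_ ?_ ?_ ?_
    · intro T hT
      simp only [Finset.mem_filter] at hT ⊢
      exact ⟨⟨Finset.mem_univ _, hT.2⟩, hT.1.2⟩
    · intro T hT
      simp only [Finset.mem_filter] at hT ⊢
      exact ⟨⟨Finset.mem_univ _, hT.2⟩, hT.1.2⟩
    · intro T _; rfl
    · intro T _; rfl
    · intro T hT
      simp only [Finset.mem_filter] at hT
      rw [hH, rankIn_pivot G u v T hT.2 hT.1.2]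
  · -- u ∉ T, v ∉ T : corresponds to u,v ∈ T' via insert
    refine Finset.sum_nbij' (fun T : Finset V => insert u (insert v T))
      (fun T' : Finset V => (T'.erase u).erase v) ?_ ?_ ?_ ?_ ?_
    · intro T hT
      simp only [Finset.mem_filter] at hT ⊢
      exact ⟨⟨Finset.mem_univ _, Finset.mem_insert_of_mem (Finset.mem_insert_self _ _)⟩,
        Finset.mem_insert_self _ _⟩
    · intro T' hT'
      simp only [Finset.mem_filter] at hT' ⊢
      refine ⟨⟨Finset.mem_univ _, ?_⟩, ?_⟩
      · intro h
        exact Finset.notMem_erase u T' (Finset.mem_of_mem_erase h)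
      · exact Finset.notMem_erase _ _
    · intro T hT
      simp only [Finset.mem_filter] at hT
      have h1 : u ∉ insert v T := by
        rw [Finset.mem_insert]
        rintro (h | h)
        · exact hne h
        · exact hT.1.2 h
      rw [Finset.erase_insert h1, Finset.erase_insert hT.2]
    · intro T' hT'
      simp only [Finset.mem_filter] at hT'
      have h1 : v ∈ T'.erase u := Finset.mem_erase.2 ⟨hne.symm, hT'.1.2⟩
      rw [Finset.insert_erase h1, Finset.insert_erase hT'.2]
    · intro T hT
      simp only [Finset.mem_filter] at hT
      have key := nullity_pivot_both G huv (insert u (insert v T))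
        (Finset.mem_insert_self _ _)
        (Finset.mem_insert_of_mem (Finset.mem_insert_self _ _))
      have h1 : u ∉ insert v T := by
        rw [Finset.mem_insert]
        rintro (h | h)
        · exact hne h
        · exact hT.1.2 h
      rw [Finset.erase_insert h1, Finset.erase_insert hT.2] at key
      rw [hH, ← key]

end Assembly2

/-- If `G''` results from adding a false twin `w` of a non-isolated vertex `v` with
neighbor `u`, then `q_N(G'';x) = q_N(G;x) + x·q_N(G^{uv} - u;x)`. -/
theorem qNull_addFalseTwin {V : Type u} [Fintype V] [DecidableEq V]
    (G : SimpleGraph V) {u v : V} (huv : G.Adj u v) :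
    qNull (addFalseTwin G v) =
      qNull G + Polynomial.X * qNull (delVert (pivot G u v) u) := by
  classical
  rw [qNull_addFalseTwin_split G v, qNull_delVert_pivot G huv]
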